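/- arXiv:1212.0417 — 9 statements merged into one kernel-verified Lean document; each statement's English description precedes it below -/
import Mathlib

section
/- Suppose (λ*, v*) is an eigenpair with ‖v*‖₂ = 1, σ ≠ λ*, and J(v*) − σI is invertible. Then ψ(v*) = (λ* − σ)⁻¹ v*, and consequently 1/‖ψ(v*)‖₂ = |λ* − σ|. -/
open Matrix Asymptotics Topology
open scoped RealInnerProductSpace

noncomputable def mvCLM {ι : Type*} [Fintype ι] [DecidableEq ι] (M : Matrix ι ι ℝ) :
    EuclideanSpace ℝ ι →L[ℝ] EuclideanSpace ℝ ι :=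
  LinearMap.toContinuousLinearMap (Matrix.toEuclideanLin M)

noncomputable def invitPsi {n : ℕ} (J : EuclideanSpace ℝ (Fin n) → Matrix (Fin n) (Fin n) ℝ)
    (σ : ℝ) (v : EuclideanSpace ℝ (Fin n)) : EuclideanSpace ℝ (Fin n) :=
  mvCLM ((J v - σ • 1)⁻¹) v

noncomputable def invitPhi {n : ℕ} (J : EuclideanSpace ℝ (Fin n) → Matrix (Fin n) (Fin n) ℝ)
    (σ : ℝ) (v : EuclideanSpace ℝ (Fin n)) : EuclideanSpace ℝ (Fin n) :=
  ‖invitPsi J σ v‖⁻¹ • invitPsi J σ v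

noncomputable def rayQuot {n : ℕ} (A : EuclideanSpace ℝ (Fin n) → Matrix (Fin n) (Fin n) ℝ)
    (v : EuclideanSpace ℝ (Fin n)) : ℝ :=
  ⟪v, mvCLM (A v) v⟫ / ⟪v, v⟫

/-!
Scale invariance of `A` makes `F(v) = A(v) v` homogeneous of degree one along the ray
through `v*`, so differentiating `t ↦ F(t v*) = t λ* v*` at `t = 1` gives Euler's identity
`J(v*) v* = F(v*) = λ* v*`. Hence `v*` is an eigenvector of `J(v*) − σI` for the nonzero
eigenvalue `λ* − σ`, and so of its inverse for `(λ* − σ)⁻¹`.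
-/

theorem HasFDerivAt.apply_self_of_eventually_smul {E F : Type*} [NormedAddCommGroup E]
    [NormedSpace ℝ E] [NormedAddCommGroup F] [NormedSpace ℝ F] {f : E → F} {f' : E →L[ℝ] F}
    {v : E} (hf : HasFDerivAt f f' v)
    (hhom : (fun t : ℝ => f (t • v)) =ᶠ[𝓝 1] fun t => t • f v) :
    f' v = f v := by
  have hray : HasDerivAt (fun t : ℝ => f (t • v)) (f' v) 1 := by
    have hline : HasDerivAt (fun t : ℝ => t • v) v 1 := by
      simpa using (hasDerivAt_id (1 : ℝ)).smul_const v
    exact (one_smul ℝ v ▸ hf).comp_hasDerivAt 1 hline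
  have hscaled : HasDerivAt (fun t : ℝ => t • f v) (f v) 1 := by
    simpa using (hasDerivAt_id (1 : ℝ)).smul_const (f v)
  exact (hray.congr_of_eventuallyEq hhom.symm).unique hscaled

section mvCLM

variable {ι : Type*} [Fintype ι] [DecidableEq ι]

theorem mvCLM_mul_apply (M N : Matrix ι ι ℝ) (v : EuclideanSpace ℝ ι) :
    mvCLM (M * N) v = mvCLM M (mvCLM N v) := by
  ext i
  simp [mvCLM, Matrix.mulVec_mulVec]

theorem mvCLM_one_apply (v : EuclideanSpace ℝ ι) : mvCLM (1 : Matrix ι ι ℝ) v = v := by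
  ext i
  simp [mvCLM]

theorem mvCLM_sub_smul_one_apply (M : Matrix ι ι ℝ) (σ : ℝ) (v : EuclideanSpace ℝ ι) :
    mvCLM (M - σ • 1) v = mvCLM M v - σ • v := by
  ext i
  simp [mvCLM]

theorem mvCLM_inv_apply_of_apply_eq_smul {M : Matrix ι ι ℝ} (hM : IsUnit M)
    {μ : ℝ} (hμ : μ ≠ 0) {v : EuclideanSpace ℝ ι} (hv : mvCLM M v = μ • v) :
    mvCLM M⁻¹ v = μ⁻¹ • v := by
  have hinv : mvCLM M⁻¹ (mvCLM M v) = v := by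
    rw [← mvCLM_mul_apply, Matrix.nonsing_inv_mul M ((Matrix.isUnit_iff_isUnit_det M).mp hM),
      mvCLM_one_apply]
  rwa [hv, map_smul, ← eq_inv_smul_iff₀ hμ] at hinv

end mvCLM

theorem stmt3_general {n : ℕ}
    (A J : EuclideanSpace ℝ (Fin n) → Matrix (Fin n) (Fin n) ℝ)
    (hscale : ∀ α : ℝ, α ≠ 0 → ∀ v : EuclideanSpace ℝ (Fin n), v ≠ 0 → A (α • v) = A v)
    (hJ : ∀ v : EuclideanSpace ℝ (Fin n), v ≠ 0 →
      HasFDerivAt (fun w => mvCLM (A w) w) (mvCLM (J v)) v)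
    (lam σ : ℝ) (vstar : EuclideanSpace ℝ (Fin n)) (hnorm : ‖vstar‖ = 1)
    (heig : mvCLM (A vstar) vstar = lam • vstar) (hσ : σ ≠ lam)
    (hinv : IsUnit (J vstar - σ • (1 : Matrix (Fin n) (Fin n) ℝ))) :
    invitPsi J σ vstar = (lam - σ)⁻¹ • vstar ∧ ‖invitPsi J σ vstar‖⁻¹ = |lam - σ| := by
  have hv : vstar ≠ 0 := norm_ne_zero_iff.mp (by rw [hnorm]; exact one_ne_zero)
  have hhom : (fun t : ℝ => mvCLM (A (t • vstar)) (t • vstar)) =ᶠ[𝓝 1]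
      fun t => t • mvCLM (A vstar) vstar := by
    filter_upwards [eventually_ne_nhds one_ne_zero] with t ht
    rw [hscale t ht vstar hv, map_smul]
  have hEuler : mvCLM (J vstar) vstar = lam • vstar :=
    ((hJ vstar hv).apply_self_of_eventually_smul hhom).trans heig
  have hshift : mvCLM (J vstar - σ • 1) vstar = (lam - σ) • vstar := by
    rw [mvCLM_sub_smul_one_apply, hEuler, sub_smul]
  have hpsi : invitPsi J σ vstar = (lam - σ)⁻¹ • vstar :=
    mvCLM_inv_apply_of_apply_eq_smul hinv (sub_ne_zero.mpr hσ.symm) hshift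
  refine ⟨hpsi, ?_⟩
  rw [hpsi, norm_smul, hnorm, mul_one, Real.norm_eq_abs, abs_inv, inv_inv]

/-- If `(λ*, v*)` is an eigenpair with `‖v*‖ = 1`, `σ ≠ λ*`, and
`J(v*) − σI` is invertible, then `ψ(v*) = (λ* − σ)⁻¹ v*` and `1/‖ψ(v*)‖ = |λ* − σ|`. -/
theorem stmt3 {n : ℕ} (hn : 1 ≤ n)
    (A J : EuclideanSpace ℝ (Fin n) → Matrix (Fin n) (Fin n) ℝ)
    (hsymm : ∀ v : EuclideanSpace ℝ (Fin n), v ≠ 0 → (A v).IsSymm)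
    (hsmooth : ContDiffOn ℝ 1 (fun w i j => A w i j) {(0 : EuclideanSpace ℝ (Fin n))}ᶜ)
    (hscale : ∀ α : ℝ, α ≠ 0 → ∀ v : EuclideanSpace ℝ (Fin n), v ≠ 0 → A (α • v) = A v)
    (hJ : ∀ v : EuclideanSpace ℝ (Fin n), v ≠ 0 →
      HasFDerivAt (fun w => mvCLM (A w) w) (mvCLM (J v)) v)
    (lam σ : ℝ) (vstar : EuclideanSpace ℝ (Fin n)) (hnorm : ‖vstar‖ = 1)
    (heig : mvCLM (A vstar) vstar = lam • vstar) (hσ : σ ≠ lam)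
    (hinv : IsUnit (J vstar - σ • (1 : Matrix (Fin n) (Fin n) ℝ))) :
    invitPsi J σ vstar = (lam - σ)⁻¹ • vstar ∧ ‖invitPsi J σ vstar‖⁻¹ = |lam - σ| :=
  stmt3_general A J hscale hJ lam σ vstar hnorm heig hσ hinv
end

section
/- Suppose (λ*, v*) is an eigenpair with ‖v*‖₂ = 1, σ ≠ λ*, and J(v*) − σI is invertible. Then φ(v*) = v* if σ < λ*, and φ(v*) = −v* if σ > λ*. -/
open Matrix Asymptotics Topology
open scoped RealInnerProductSpace

lemma mvCLM_apply {ι : Type*} [Fintype ι] [DecidableEq ι] (M : Matrix ι ι ℝ)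
    (v : EuclideanSpace ℝ ι) :
    mvCLM M v = (WithLp.equiv 2 (ι → ℝ)).symm (M *ᵥ (WithLp.equiv 2 (ι → ℝ)) v) := by
  simp [mvCLM, Matrix.toEuclideanLin_apply]

lemma mvCLM_mul {ι : Type*} [Fintype ι] [DecidableEq ι] (M N : Matrix ι ι ℝ)
    (v : EuclideanSpace ℝ ι) : mvCLM (M * N) v = mvCLM M (mvCLM N v) := by
  simp [mvCLM_apply, Matrix.mulVec_mulVec]

lemma mvCLM_sub {ι : Type*} [Fintype ι] [DecidableEq ι] (M N : Matrix ι ι ℝ)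
    (v : EuclideanSpace ℝ ι) : mvCLM (M - N) v = mvCLM M v - mvCLM N v := by
  simp [mvCLM_apply, Matrix.sub_mulVec]

lemma mvCLM_smul_one {ι : Type*} [Fintype ι] [DecidableEq ι] (σ : ℝ)
    (v : EuclideanSpace ℝ ι) : mvCLM (σ • (1 : Matrix ι ι ℝ)) v = σ • v := by
  simp [mvCLM_apply, Matrix.smul_mulVec]

lemma mvCLM_one {ι : Type*} [Fintype ι] [DecidableEq ι]
    (v : EuclideanSpace ℝ ι) : mvCLM (1 : Matrix ι ι ℝ) v = v := by
  simp [mvCLM_apply]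

/-- If `(λ*, v*)` is an eigenpair with `‖v*‖ = 1`, `σ ≠ λ*`, and
`J(v*) − σI` invertible, then `φ(v*) = v*` if `σ < λ*` and `φ(v*) = −v*` if `σ > λ*`. -/
theorem stmt4 {n : ℕ} (hn : 1 ≤ n)
    (A J : EuclideanSpace ℝ (Fin n) → Matrix (Fin n) (Fin n) ℝ)
    (hsymm : ∀ v : EuclideanSpace ℝ (Fin n), v ≠ 0 → (A v).IsSymm)
    (hsmooth : ContDiffOn ℝ 1 (fun w i j => A w i j) {(0 : EuclideanSpace ℝ (Fin n))}ᶜ)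
    (hscale : ∀ α : ℝ, α ≠ 0 → ∀ v : EuclideanSpace ℝ (Fin n), v ≠ 0 → A (α • v) = A v)
    (hJ : ∀ v : EuclideanSpace ℝ (Fin n), v ≠ 0 →
      HasFDerivAt (fun w => mvCLM (A w) w) (mvCLM (J v)) v)
    (lam σ : ℝ) (vstar : EuclideanSpace ℝ (Fin n)) (hnorm : ‖vstar‖ = 1)
    (heig : mvCLM (A vstar) vstar = lam • vstar) (hσ : σ ≠ lam)
    (hinv : IsUnit (J vstar - σ • (1 : Matrix (Fin n) (Fin n) ℝ))) :
    (σ < lam → invitPhi J σ vstar = vstar) ∧ (lam < σ → invitPhi J σ vstar = -vstar) := by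
  have hv0 : vstar ≠ 0 := by
    intro h; rw [h, norm_zero] at hnorm; exact one_ne_zero hnorm.symm
  -- derivative along the ray
  have hray : HasDerivAt (fun t : ℝ => t • vstar) vstar 1 := by
    simpa using (hasDerivAt_id (1 : ℝ)).smul_const vstar
  have h2 : HasDerivAt (fun t : ℝ => mvCLM (A (t • vstar)) (t • vstar))
      (mvCLM (J vstar) vstar) 1 := by
    have hJ1 : HasFDerivAt (fun w => mvCLM (A w) w) (mvCLM (J vstar)) ((1:ℝ) • vstar) := by
      rw [one_smul]; exact hJ vstar hv0
    exact hJ1.comp_hasDerivAt (1 : ℝ) hray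
  have h3 : HasDerivAt (fun t : ℝ => t • (lam • vstar)) (lam • vstar) 1 := by
    simpa using (hasDerivAt_id (1 : ℝ)).smul_const (lam • vstar)
  have heq : ∀ᶠ t : ℝ in 𝓝 1, mvCLM (A (t • vstar)) (t • vstar) = t • (lam • vstar) := by
    have hne : {t : ℝ | t ≠ 0} ∈ 𝓝 (1 : ℝ) :=
      IsOpen.mem_nhds (isOpen_ne) one_ne_zero
    filter_upwards [hne] with t ht
    rw [hscale t ht vstar hv0, (mvCLM (A vstar)).map_smul, heig]
  have h2' : HasDerivAt (fun t : ℝ => mvCLM (A (t • vstar)) (t • vstar)) (lam • vstar) 1 :=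
    h3.congr_of_eventuallyEq heq
  have hJv : mvCLM (J vstar) vstar = lam • vstar := h2.unique h2'
  set M := J vstar - σ • (1 : Matrix (Fin n) (Fin n) ℝ) with hM
  have hMv : mvCLM M vstar = (lam - σ) • vstar := by
    rw [hM, mvCLM_sub, hJv, mvCLM_smul_one, sub_smul]
  have hdet : IsUnit M.det := (Matrix.isUnit_iff_isUnit_det M).mp hinv
  have hls : lam - σ ≠ 0 := sub_ne_zero.mpr (Ne.symm hσ)
  have hMiMv : mvCLM M⁻¹ (mvCLM M vstar) = vstar := by
    rw [← mvCLM_mul, Matrix.nonsing_inv_mul M hdet, mvCLM_one]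
  have hpsi : invitPsi J σ vstar = (lam - σ)⁻¹ • vstar := by
    have hthis : (lam - σ) • mvCLM M⁻¹ vstar = vstar := by
      rw [← (mvCLM M⁻¹).map_smul, ← hMv, hMiMv]
    have h4 : mvCLM M⁻¹ vstar = (lam - σ)⁻¹ • vstar := by
      have := congrArg (fun x => (lam - σ)⁻¹ • x) hthis
      simpa [smul_smul, inv_mul_cancel₀ hls] using this
    simpa [invitPsi, hM] using h4
  have hnpsi : ‖invitPsi J σ vstar‖ = |lam - σ|⁻¹ := by
    rw [hpsi, norm_smul, hnorm, mul_one, Real.norm_eq_abs, abs_inv]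
  have hphi : invitPhi J σ vstar = (|lam - σ| * (lam - σ)⁻¹) • vstar := by
    rw [invitPhi, hnpsi, hpsi, smul_smul, inv_inv]
  constructor
  · intro h
    have hpos : 0 < lam - σ := sub_pos.mpr h
    rw [hphi, abs_of_pos hpos, mul_inv_cancel₀ hls, one_smul]
  · intro h
    have hneg : lam - σ < 0 := sub_neg.mpr h
    rw [hphi, abs_of_neg hneg, neg_mul, mul_inv_cancel₀ hls, neg_one_smul]
end

section
/- Assume A is twice continuously differentiable on ℝⁿ∖{0}. Suppose (λ*, v*) is an eigenpair with ‖v*‖₂ = 1 and J(v*) − σI is invertible. Then ψ is differentiable at v* and its Fréchet derivative is the linear map x ↦ (J(v*) − σI)⁻¹x, i.e. ψ'(v*) = (J(v*) − σI)⁻¹. -/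
open Matrix Asymptotics Topology
open scoped RealInnerProductSpace

open scoped Ring

/-!
Write `M(v) = J(v) - σI`, so `ψ v = M(v)⁻¹ v` and `ψ'(v*) x = M⁻¹ x - M⁻¹ (M'(v*) x) M⁻¹ v*`.
Scaling invariance makes `F v = A(v) v` homogeneous of degree one, so Euler's identity
`J(v) v = F v` holds near `v*`. Hence `v*` is an eigenvector of `J(v*)`, `M⁻¹ v*` is a multiple
of `v*`, and differentiating Euler's identity (its right side has derivative `J`) gives
`M'(v*) x v* = J'(v*) x v* = 0`, so the second term vanishes.
-/

theorem MulEquivClass.map_ringInverse {F M₀ N₀ : Type*} [MonoidWithZero M₀] [MonoidWithZero N₀]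
    [EquivLike F M₀ N₀] [MulEquivClass F M₀ N₀] (e : F) (a : M₀) : e a⁻¹ʳ = (e a)⁻¹ʳ := by
  by_cases ha : IsUnit a
  · calc e a⁻¹ʳ = (e a)⁻¹ʳ * (e a * e a⁻¹ʳ) :=
          (Ring.inverse_mul_cancel_left _ _ (ha.map e)).symm
      _ = (e a)⁻¹ʳ := by rw [← map_mul, Ring.mul_inverse_cancel a ha, map_one, mul_one]
  · rw [Ring.inverse_non_unit a ha, Ring.inverse_non_unit _ (by rwa [isUnit_map_iff]), map_zero]

section Calculus

variable {E F : Type*} [NormedAddCommGroup E] [NormedSpace ℝ E]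
  [NormedAddCommGroup F] [NormedSpace ℝ F]

theorem HasFDerivAt.apply_self_of_homogeneous {f : E → F} {f' : E →L[ℝ] F} {v : E}
    (hf : HasFDerivAt f f' v) (hhom : ∀ t : ℝ, t ≠ 0 → f (t • v) = t • f v) : f' v = f v := by
  have hray : HasDerivAt (fun t : ℝ => f (t • v)) (f' v) 1 := by
    have hline : HasDerivAt (fun t : ℝ => t • v) v 1 := by
      simpa using (hasDerivAt_id (1 : ℝ)).smul_const v
    exact (one_smul ℝ v ▸ hf).comp_hasDerivAt 1 hline
  have hscaled : HasDerivAt (fun t : ℝ => f (t • v)) (f v) 1 := by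
    have hlin : HasDerivAt (fun t : ℝ => t • f v) (f v) 1 := by
      simpa using (hasDerivAt_id (1 : ℝ)).smul_const (f v)
    refine hlin.congr_of_eventuallyEq ?_
    filter_upwards [isOpen_ne.mem_nhds one_ne_zero] with t ht
    exact hhom t ht
  exact hray.unique hscaled

theorem HasFDerivAt.apply_self_eq_zero_of_hasFDerivAt_apply_self {M : E → E →L[ℝ] F}
    {B : E →L[ℝ] E →L[ℝ] F} {v : E} (hM : HasFDerivAt M B v)
    (hMv : HasFDerivAt (fun w => M w w) (M v) v) (x : E) : B x v = 0 := by
  simpa using congrArg (· x) ((hM.clm_apply (hasFDerivAt_id v)).unique hMv)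

theorem ContDiffAt.differentiableAt_of_hasFDerivAt {f : E → F} {f' : E → E →L[ℝ] F} {v : E}
    (hf : ContDiffAt ℝ 2 f v) (hf' : ∀ᶠ w in 𝓝 v, HasFDerivAt f (f' w) w) :
    DifferentiableAt ℝ f' v := by
  have hd : DifferentiableAt ℝ (fderiv ℝ f) v :=
    (hf.fderiv_right (m := 1) (by norm_num)).differentiableAt one_ne_zero
  exact hd.congr_of_eventuallyEq (hf'.mono fun w hw => hw.fderiv.symm)

theorem ContinuousLinearMap.ringInverse_apply_of_apply_eq_smul {T : E →L[ℝ] E} (hT : IsUnit T)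
    {w : E} {c : ℝ} (h : T w = c • w) : T⁻¹ʳ w = c⁻¹ • w := by
  have hleft (y : E) : T⁻¹ʳ (T y) = y := by
    rw [← mul_apply_eq_comp, Ring.inverse_mul_cancel T hT, one_apply_eq_self]
  rcases eq_or_ne c 0 with rfl | hc
  · obtain rfl : w = 0 := by rw [zero_smul] at h; rw [← hleft w, h, map_zero]
    simp
  · rw [← hleft (c⁻¹ • w), map_smul, h, inv_smul_smul₀ hc]

theorem hasFDerivAt_ringInverse_apply_self [CompleteSpace E] {M : E → E →L[ℝ] E}
    {B : E →L[ℝ] E →L[ℝ] E} {v : E} (hM : HasFDerivAt M B v) (hunit : IsUnit (M v))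
    (hker : ∀ x, B x ((M v)⁻¹ʳ v) = 0) :
    HasFDerivAt (fun w => (M w)⁻¹ʳ w) (M v)⁻¹ʳ v := by
  obtain ⟨u, hu⟩ := hunit
  have hinv := hasFDerivAt_ringInverse (𝕜 := ℝ) u
  rw [hu] at hinv
  rw [← hu, Ring.inverse_unit] at hker
  have h := (hinv.comp v hM).clm_apply (hasFDerivAt_id v)
  refine h.congr_fderiv ?_
  ext x
  simp [← hu, hker]

end Calculus

section Matrix

variable {ι : Type*} [Fintype ι] [DecidableEq ι]

theorem ContDiffOn.mvCLM_apply {E : Type*} [NormedAddCommGroup E] [NormedSpace ℝ E]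
    {A : E → Matrix ι ι ℝ} {g : E → EuclideanSpace ℝ ι} {s : Set E} {k : WithTop ℕ∞}
    (hA : ContDiffOn ℝ k (fun w i j => A w i j) s) (hg : ContDiffOn ℝ k g s) :
    ContDiffOn ℝ k (fun w => mvCLM (A w) (g w)) s := by
  let L : (ι → ι → ℝ) →L[ℝ] EuclideanSpace ℝ ι →L[ℝ] EuclideanSpace ℝ ι :=
    LinearMap.toContinuousLinearMap
      (Matrix.toEuclideanLin.trans LinearMap.toContinuousLinearMap).toLinearMap
  exact (L.contDiff.comp_contDiffOn hA).clm_apply hg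

theorem isUnit_mvCLM_iff (M : Matrix ι ι ℝ) : IsUnit (mvCLM M) ↔ IsUnit M :=
  isUnit_map_iff (Matrix.toEuclideanCLM (n := ι) (𝕜 := ℝ)) M

theorem mvCLM_nonsing_inv (M : Matrix ι ι ℝ) : mvCLM M⁻¹ = (mvCLM M)⁻¹ʳ := by
  rw [nonsing_inv_eq_ringInverse]
  exact MulEquivClass.map_ringInverse (Matrix.toEuclideanCLM (n := ι) (𝕜 := ℝ)) M

theorem mvCLM_sub_smul_one (M : Matrix ι ι ℝ) (σ : ℝ) :
    mvCLM (M - σ • 1) = mvCLM M - σ • 1 := by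
  change toEuclideanCLM (𝕜 := ℝ) (M - σ • 1) = toEuclideanCLM (𝕜 := ℝ) M - σ • 1
  rw [map_sub, map_smul, map_one]

end Matrix

theorem invitPsi_eq_ringInverse_apply {n : ℕ}
    (J : EuclideanSpace ℝ (Fin n) → Matrix (Fin n) (Fin n) ℝ) (σ : ℝ) :
    invitPsi J σ = fun v => (mvCLM (J v) - σ • 1)⁻¹ʳ v := by
  funext v
  rw [invitPsi, mvCLM_nonsing_inv, mvCLM_sub_smul_one]

theorem stmt7_general {n : ℕ}
    (A J : EuclideanSpace ℝ (Fin n) → Matrix (Fin n) (Fin n) ℝ)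
    (hsmooth : ContDiffOn ℝ 2 (fun w i j => A w i j) {(0 : EuclideanSpace ℝ (Fin n))}ᶜ)
    (hscale : ∀ α : ℝ, α ≠ 0 → ∀ v : EuclideanSpace ℝ (Fin n), v ≠ 0 → A (α • v) = A v)
    (hJ : ∀ v : EuclideanSpace ℝ (Fin n), v ≠ 0 →
      HasFDerivAt (fun w => mvCLM (A w) w) (mvCLM (J v)) v)
    (lam σ : ℝ) (vstar : EuclideanSpace ℝ (Fin n)) (hnorm : ‖vstar‖ = 1)
    (heig : mvCLM (A vstar) vstar = lam • vstar)
    (hinv : IsUnit (J vstar - σ • (1 : Matrix (Fin n) (Fin n) ℝ))) :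
    HasFDerivAt (invitPsi J σ) (mvCLM ((J vstar - σ • 1)⁻¹)) vstar := by
  have hv0 : vstar ≠ 0 := ne_zero_of_norm_ne_zero (hnorm ▸ one_ne_zero)
  have hnear : ∀ᶠ w in 𝓝 vstar, w ≠ 0 := isOpen_ne.mem_nhds hv0
  have heuler : ∀ v, v ≠ 0 → mvCLM (J v) v = mvCLM (A v) v := fun v hv =>
    (hJ v hv).apply_self_of_homogeneous fun t ht => by rw [hscale t ht v hv, map_smul]
  obtain ⟨B, hB⟩ : DifferentiableAt ℝ (fun w => mvCLM (J w)) vstar :=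
    ((hsmooth.mvCLM_apply contDiffOn_id).contDiffAt (isOpen_ne.mem_nhds hv0))
      |>.differentiableAt_of_hasFDerivAt (hnear.mono hJ)
  have hBv : ∀ x, B x vstar = 0 := hB.apply_self_eq_zero_of_hasFDerivAt_apply_self
    ((hJ vstar hv0).congr_of_eventuallyEq (hnear.mono heuler))
  have hunit : IsUnit (mvCLM (J vstar) - σ • 1) := by
    rwa [← mvCLM_sub_smul_one, isUnit_mvCLM_iff]
  have hMv : (mvCLM (J vstar) - σ • 1) vstar = (lam - σ) • vstar := by
    simp [heuler vstar hv0, heig, sub_smul]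
  rw [invitPsi_eq_ringInverse_apply, mvCLM_nonsing_inv, mvCLM_sub_smul_one]
  refine hasFDerivAt_ringInverse_apply_self (hB.sub_const _) hunit fun x => ?_
  rw [ContinuousLinearMap.ringInverse_apply_of_apply_eq_smul hunit hMv, map_smul, hBv, smul_zero]

/-- If `A` is twice continuously differentiable on `ℝⁿ∖{0}`, `(λ*, v*)`
is an eigenpair with `‖v*‖ = 1` and `J(v*) − σI` is invertible, then `ψ` is differentiable
at `v*` with Fréchet derivative `x ↦ (J(v*) − σI)⁻¹ x`. -/
theorem stmt7 {n : ℕ} (hn : 1 ≤ n)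
    (A J : EuclideanSpace ℝ (Fin n) → Matrix (Fin n) (Fin n) ℝ)
    (hsymm : ∀ v : EuclideanSpace ℝ (Fin n), v ≠ 0 → (A v).IsSymm)
    (hsmooth : ContDiffOn ℝ 2 (fun w i j => A w i j) {(0 : EuclideanSpace ℝ (Fin n))}ᶜ)
    (hscale : ∀ α : ℝ, α ≠ 0 → ∀ v : EuclideanSpace ℝ (Fin n), v ≠ 0 → A (α • v) = A v)
    (hJ : ∀ v : EuclideanSpace ℝ (Fin n), v ≠ 0 →
      HasFDerivAt (fun w => mvCLM (A w) w) (mvCLM (J v)) v)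
    (lam σ : ℝ) (vstar : EuclideanSpace ℝ (Fin n)) (hnorm : ‖vstar‖ = 1)
    (heig : mvCLM (A vstar) vstar = lam • vstar)
    (hinv : IsUnit (J vstar - σ • (1 : Matrix (Fin n) (Fin n) ℝ))) :
    HasFDerivAt (invitPsi J σ) (mvCLM ((J vstar - σ • 1)⁻¹)) vstar :=
  stmt7_general A J hsmooth hscale hJ lam σ vstar hnorm heig hinv
end

section
/- Let n ≥ 2 and suppose (λ*, v*) is an eigenpair with ‖v*‖₂ = 1 such that λ* is an eigenvalue of J(v*) of algebraic multiplicity one (over ℂ) and σ ∈ ℝ is not a complex eigenvalue of J(v*). Then the spectral radius (over ℂ) of the matrix (I − v*v*ᵀ)(J(v*) − σI)⁻¹ equals the maximum of 1/|μ − σ| over all complex eigenvalues μ of J(v*) with μ ≠ λ*. Consequently the spectral radius of φ'(v*) = |λ* − σ|(I − v*v*ᵀ)(J(v*) − σI)⁻¹ equals γ = |λ* − σ|/|μ₂ − σ|, where μ₂ is a complex eigenvalue of J(v*) distinct from λ* minimizing |μ − σ|. -/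
open Matrix Asymptotics Topology
open scoped RealInnerProductSpace

/-! Scale invariance of `A` makes `v ↦ A(v)v` homogeneous of degree one, so Euler's identity
gives `J(v*)v* = λ*v*`. With `D = J(v*) - σI` and `M = (I - v*v*ᵀ)D⁻¹` one has
`(zI - M)D = (zD - I) + v*v*ᵀ`, and as `v*` is an eigenvector of `zD - I` the matrix determinant
lemma yields `charpoly M · det D = (λ* - σ)X · ∏ ((μ - σ)X - 1)`, the product running over the
eigenvalues `μ` of `J(v*)` with multiplicity, one copy of `λ*` removed. So the nonzero eigenvalues
of `M` are the `1/(μ - σ)` with `μ ≠ λ*`: the simplicity of `λ*` is what removes `1/(λ* - σ)`. -/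

open Polynomial

namespace Matrix

variable {ι K : Type*} [Fintype ι] [DecidableEq ι] [Field K]

theorem mul_det_add_vecMulVec_of_mulVec_eq_smul {S : Matrix ι ι K} {u : ι → K} {b : K}
    (hSu : S *ᵥ u = b • u) (v : ι → K) :
    b * (S + vecMulVec u v).det = (b + v ⬝ᵥ u) * S.det := by
  rcases eq_or_ne b 0 with rfl | hb
  · rcases eq_or_ne u 0 with rfl | hu
    · simp
    · have hdet : S.det = 0 := exists_mulVec_eq_zero_iff.mp ⟨u, hu, by simpa using hSu⟩
      simp [hdet]
  · have hfactor : S + vecMulVec u v = S * (1 + vecMulVec (b⁻¹ • u) v) := by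
      rw [Matrix.mul_add, Matrix.mul_one, mul_vecMulVec, Matrix.mulVec_smul, hSu,
        smul_smul, inv_mul_cancel₀ hb, one_smul]
    rw [hfactor, det_mul, vecMulVec_eq Unit, det_one_add_replicateCol_mul_replicateRow,
      dotProduct_smul, smul_eq_mul]
    field_simp

theorem eval_charpoly_mul_det_of_mulVec_eq_smul {D : Matrix ι ι K} (hD : IsUnit D.det)
    {u : ι → K} {d : K} (hDu : D *ᵥ u = d • u) (v : ι → K) (z : K) :
    (d * z - 1) * (((1 - vecMulVec u v) * D⁻¹).charpoly.eval z * D.det)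
      = (d * z - 1 + v ⬝ᵥ u) * (z • D - 1).det := by
  have hfactor : (scalar ι z - (1 - vecMulVec u v) * D⁻¹) * D = z • D - 1 + vecMulVec u v := by
    rw [Matrix.sub_mul, Matrix.mul_assoc, nonsing_inv_mul _ hD, Matrix.mul_one, scalar_apply,
      ← smul_one_eq_diagonal, Matrix.smul_mul, Matrix.one_mul]
    abel
  have hSu : (z • D - 1) *ᵥ u = (d * z - 1) • u := by
    rw [sub_mulVec, smul_mulVec, hDu, one_mulVec, smul_smul, sub_smul, one_smul, mul_comm]
  rw [eval_charpoly, ← det_mul, hfactor, mul_det_add_vecMulVec_of_mulVec_eq_smul hSu]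

theorem det_smul_sub_one_eq_prod_roots {B : Matrix ι ι K} (hB : B.charpoly.Splits) (s z : K) :
    (z • (B - s • 1) - 1).det = (B.charpoly.roots.map fun μ => (μ - s) * z - 1).prod := by
  have hcard : B.charpoly.roots.card = Fintype.card ι := by
    rw [← hB.natDegree_eq_card_roots, charpoly_natDegree_eq_dim]
  rcases eq_or_ne z 0 with rfl | hz
  · simp [hcard, det_neg]
  have hshift : z • (B - s • 1) - 1 = (-z) • (scalar ι (s + z⁻¹) - B) := by
    rw [scalar_apply, ← smul_one_eq_diagonal]
    match_scalars
    · ring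
    · field_simp
      ring
  rw [hshift, det_smul, ← eval_charpoly, hB.eval_eq_prod_roots, B.charpoly_monic.leadingCoeff,
    one_mul, ← hcard, ← Multiset.prod_replicate, ← Multiset.map_const', ← Multiset.prod_map_mul]
  congr 1
  refine Multiset.map_congr rfl fun μ _ => ?_
  field_simp
  ring

theorem isRoot_charpoly_of_mulVec_eq_smul {B : Matrix ι ι K} {u : ι → K} {l : K} (hu : u ≠ 0)
    (hBu : B *ᵥ u = l • u) : B.charpoly.IsRoot l := by
  rw [IsRoot, eval_charpoly]
  refine exists_mulVec_eq_zero_iff.mp ⟨u, hu, ?_⟩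
  rw [sub_mulVec, hBu, scalar_apply, ← smul_one_eq_diagonal, smul_mulVec, one_mulVec, sub_self]

theorem isUnit_det_sub_smul_one_of_notMem_spectrum {B : Matrix ι ι K} {s : K}
    (hs : s ∉ spectrum K B) : IsUnit (B - s • 1).det := by
  rw [spectrum.notMem_iff, Algebra.algebraMap_eq_smul_one, ← IsUnit.neg_iff, neg_sub] at hs
  exact (isUnit_iff_isUnit_det _).mp hs

section Infinite

variable [DecidableEq K] [Infinite K]

theorem charpoly_projection_mul_inv_mul_det {B : Matrix ι ι K} (hB : B.charpoly.Splits)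
    {u v : ι → K} {l s : K} (hvu : v ⬝ᵥ u = 1) (hBu : B *ᵥ u = l • u)
    (hs : IsUnit (B - s • 1).det) :
    ((1 - vecMulVec u v) * (B - s • 1)⁻¹).charpoly * C (B - s • 1).det
      = C (l - s) * X * ((B.charpoly.roots.erase l).map fun μ => C (μ - s) * X - 1).prod := by
  have hu : u ≠ 0 := by rintro rfl; simp at hvu
  have hDu : (B - s • 1) *ᵥ u = (l - s) • u := by
    rw [sub_mulVec, hBu, smul_mulVec, one_mulVec, sub_smul]
  have hl : l ∈ B.charpoly.roots :=
    (mem_roots B.charpoly_monic.ne_zero).mpr (isRoot_charpoly_of_mulVec_eq_smul hu hBu)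
  have hfactor_ne : (C (l - s) * X - 1 : K[X]) ≠ 0 := fun h => by
    simpa using congrArg (eval 0) h
  -- pointwise the factor `(l - s) z - 1` may vanish, so it is cancelled as a polynomial
  refine mul_left_cancel₀ hfactor_ne (Polynomial.funext fun z => ?_)
  have key := eval_charpoly_mul_det_of_mulVec_eq_smul hs hDu v z
  rw [hvu, sub_add_cancel, det_smul_sub_one_eq_prod_roots hB, ← Multiset.cons_erase hl,
    Multiset.map_cons, Multiset.prod_cons] at key
  simp only [eval_mul, eval_sub, eval_C, eval_X, eval_one, eval_multiset_prod, Multiset.map_map,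
    Function.comp_def]
  rw [key]
  ring

theorem mem_spectrum_projection_mul_inv_iff {B : Matrix ι ι K} (hB : B.charpoly.Splits)
    {u v : ι → K} {l s : K} (hvu : v ⬝ᵥ u = 1) (hBu : B *ᵥ u = l • u) (hs : s ∉ spectrum K B)
    {z : K} :
    z ∈ spectrum K ((1 - vecMulVec u v) * (B - s • 1)⁻¹)
      ↔ z = 0 ∨ ∃ μ ∈ B.charpoly.roots.erase l, (μ - s) * z = 1 := by
  have hD := isUnit_det_sub_smul_one_of_notMem_spectrum hs
  have hls : l - s ≠ 0 := by
    have hu : u ≠ 0 := by rintro rfl; simp at hvu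
    rw [sub_ne_zero]
    rintro rfl
    exact hs (mem_spectrum_iff_isRoot_charpoly.mpr (isRoot_charpoly_of_mulVec_eq_smul hu hBu))
  have key := congrArg (eval z) (charpoly_projection_mul_inv_mul_det hB hvu hBu hD)
  simp only [eval_mul, eval_C, eval_X, eval_multiset_prod, Multiset.map_map, Function.comp_def,
    eval_sub, eval_one] at key
  rw [mem_spectrum_iff_isRoot_charpoly, IsRoot.def, ← mul_eq_zero_iff_right hD.ne_zero, key]
  simp [hls, Multiset.prod_eq_zero_iff, sub_eq_zero]

end Infinite

end Matrix

theorem Matrix.isGreatest_norm_image_spectrum_projection_mul_inv {ι K : Type*} [Fintype ι]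
    [DecidableEq ι] [NormedField K] [IsAlgClosed K] {B : Matrix ι ι K} {u v : ι → K} {l s μ₂ : K}
    (hvu : v ⬝ᵥ u = 1) (hBu : B *ᵥ u = l • u) (hl : B.charpoly.rootMultiplicity l = 1)
    (hs : s ∉ spectrum K B) (hμ₂ : μ₂ ∈ spectrum K B) (hμ₂l : μ₂ ≠ l)
    (hmin : ∀ μ ∈ spectrum K B, μ ≠ l → ‖μ₂ - s‖ ≤ ‖μ - s‖) :
    IsGreatest ((‖·‖) '' spectrum K ((1 - vecMulVec u v) * (B - s • 1)⁻¹)) ‖μ₂ - s‖⁻¹ := by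
  classical
  have hB : B.charpoly.Splits := IsAlgClosed.splits _
  have hsimple : ∀ μ, μ ∈ B.charpoly.roots.erase l ↔ μ ∈ spectrum K B ∧ μ ≠ l := by
    intro μ
    rw [mem_spectrum_iff_isRoot_charpoly, ← mem_roots B.charpoly_monic.ne_zero]
    rcases eq_or_ne μ l with rfl | hμl
    · simp [← Multiset.count_eq_zero, Multiset.count_erase_self, count_roots, hl]
    · simp [Multiset.mem_erase_of_ne hμl, hμl]
  have hμ₂s : μ₂ - s ≠ 0 := sub_ne_zero.mpr fun h => hs (h ▸ hμ₂)
  refine ⟨⟨(μ₂ - s)⁻¹, ?_, norm_inv _⟩, ?_⟩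
  · exact (mem_spectrum_projection_mul_inv_iff hB hvu hBu hs).mpr
      (Or.inr ⟨μ₂, (hsimple μ₂).mpr ⟨hμ₂, hμ₂l⟩, mul_inv_cancel₀ hμ₂s⟩)
  rintro _ ⟨z, hz, rfl⟩
  rcases (mem_spectrum_projection_mul_inv_iff hB hvu hBu hs).mp hz with rfl | ⟨μ, hμ, hμz⟩
  · simp
  obtain ⟨hμB, hμl⟩ := (hsimple μ).mp hμ
  simp only [eq_inv_of_mul_eq_one_right hμz, norm_inv]
  exact inv_anti₀ (norm_pos_iff.mpr hμ₂s) (hmin μ hμB hμl)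

theorem IsGreatest.norm_image_spectrum_smul {𝕜 A : Type*} [NormedField 𝕜] [Ring A] [Algebra 𝕜 A]
    {a : A} {r : ℝ} (h : IsGreatest ((‖·‖) '' spectrum 𝕜 a) r) (c : 𝕜) :
    IsGreatest ((‖·‖) '' spectrum 𝕜 (c • a)) (‖c‖ * r) := by
  have hne : (spectrum 𝕜 a).Nonempty := h.nonempty.of_image
  have : Nontrivial A := by
    by_contra htriv
    rw [not_nontrivial_iff_subsingleton] at htriv
    simp [spectrum.of_subsingleton] at hne
  rw [spectrum.smul_eq_smul c a hne, ← Set.image_smul, Set.image_image]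
  simpa only [norm_smul, Set.image_image] using
    (monotone_mul_left_of_nonneg (norm_nonneg c)).map_isGreatest h

theorem RingHom.mapMatrix_inv {ι K L : Type*} [Fintype ι] [DecidableEq ι] [Field K] [Field L]
    (f : K →+* L) (A : Matrix ι ι K) : f.mapMatrix A⁻¹ = (f.mapMatrix A)⁻¹ := by
  rw [Matrix.inv_def, Matrix.inv_def, ← f.map_adjugate, ← f.map_det]
  ext i j
  simp [Ring.inverse_eq_inv']

theorem RingHom.map_mulVec_of_mulVec_eq_smul {ι R S : Type*} [Fintype ι] [Semiring R] [Semiring S]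
    (f : R →+* S) {M : Matrix ι ι R} {x : ι → R} {c : R} (h : M *ᵥ x = c • x) :
    M.map f *ᵥ (f ∘ x) = f c • (f ∘ x) := by
  ext i
  simp [← f.map_mulVec, h]

theorem Matrix.map_projection_mul_inv {ι K L : Type*} [Fintype ι] [DecidableEq ι] [Field K]
    [Field L] (f : K →+* L) (B : Matrix ι ι K) (u v : ι → K) (s : K) :
    ((1 - vecMulVec u v) * (B - s • 1)⁻¹).map f
      = (1 - vecMulVec (f ∘ u) (f ∘ v)) * (B.map f - f s • 1)⁻¹ := by
  rw [← f.mapMatrix_apply, map_mul, f.mapMatrix_inv, map_sub, map_sub, map_one]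
  congr 3
  · ext i j
    simp [vecMulVec_apply]
  · ext i j
    by_cases h : i = j <;> simp [h]

theorem EuclideanSpace.dotProduct_ofLp_self {ι : Type*} [Fintype ι] (x : EuclideanSpace ℝ ι) :
    x.ofLp ⬝ᵥ x.ofLp = ‖x‖ ^ 2 := by
  rw [← real_inner_self_eq_norm_sq, EuclideanSpace.inner_eq_star_dotProduct, star_trivial]

theorem HasFDerivAt.apply_self_eq_of_homogeneous {E F : Type*} [NormedAddCommGroup E]
    [NormedSpace ℝ E] [NormedAddCommGroup F] [NormedSpace ℝ F] {f : E → F} {f' : E →L[ℝ] F}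
    {v : E} (hf : HasFDerivAt f f' v) (hhom : ∀ᶠ t in 𝓝 (1 : ℝ), f (t • v) = t • f v) :
    f' v = f v := by
  have hline : HasDerivAt (fun t : ℝ => t • v) v 1 := by
    simpa using (hasDerivAt_id (1 : ℝ)).smul_const v
  have hcomp : HasDerivAt (fun t : ℝ => f (t • v)) (f' v) 1 :=
    (one_smul ℝ v ▸ hf).comp_hasDerivAt (1 : ℝ) hline
  have hlin : HasDerivAt (fun t : ℝ => t • f v) (f v) 1 := by
    simpa using (hasDerivAt_id (1 : ℝ)).smul_const (f v)
  exact hcomp.unique (hlin.congr_of_eventuallyEq hhom)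

theorem stmt10_general {n : ℕ}
    (A J : EuclideanSpace ℝ (Fin n) → Matrix (Fin n) (Fin n) ℝ)
    (hscale : ∀ α : ℝ, α ≠ 0 → ∀ v : EuclideanSpace ℝ (Fin n), v ≠ 0 → A (α • v) = A v)
    (hJ : ∀ v : EuclideanSpace ℝ (Fin n), v ≠ 0 →
      HasFDerivAt (fun w => mvCLM (A w) w) (mvCLM (J v)) v)
    (lam σ : ℝ) (vstar : EuclideanSpace ℝ (Fin n)) (hnorm : ‖vstar‖ = 1)
    (heig : mvCLM (A vstar) vstar = lam • vstar)
    (hmult : ((J vstar).map (Complex.ofReal)).charpoly.rootMultiplicity (lam : ℂ) = 1)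
    (hσ : (σ : ℂ) ∉ spectrum ℂ ((J vstar).map (Complex.ofReal)))
    (μ₂ : ℂ) (hμ₂ : μ₂ ∈ spectrum ℂ ((J vstar).map (Complex.ofReal)))
    (hμ₂ne : μ₂ ≠ (lam : ℂ))
    (hmin : ∀ μ ∈ spectrum ℂ ((J vstar).map (Complex.ofReal)), μ ≠ (lam : ℂ) →
      ‖μ₂ - (σ : ℂ)‖ ≤ ‖μ - (σ : ℂ)‖) :
    IsGreatest ((fun z : ℂ => ‖z‖) '' spectrum ℂ
        ((((1 - Matrix.vecMulVec vstar vstar) * (J vstar - σ • 1)⁻¹)).map (Complex.ofReal)))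
      ‖μ₂ - (σ : ℂ)‖⁻¹ ∧
    IsGreatest ((fun z : ℂ => ‖z‖) '' spectrum ℂ
        ((|lam - σ| • ((1 - Matrix.vecMulVec vstar vstar) * (J vstar - σ • 1)⁻¹)).map
          (Complex.ofReal)))
      (|lam - σ| / ‖μ₂ - (σ : ℂ)‖) := by
  have hv : vstar ≠ 0 := by rintro rfl; simp at hnorm
  have hJv : mvCLM (J vstar) vstar = lam • vstar := by
    rw [← heig]
    refine (hJ vstar hv).apply_self_eq_of_homogeneous ?_
    filter_upwards [eventually_ne_nhds one_ne_zero] with t ht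
    rw [hscale t ht vstar hv, map_smul]
  have hBw := Complex.ofRealHom.map_mulVec_of_mulVec_eq_smul (congrArg WithLp.ofLp hJv)
  have hww : (Complex.ofRealHom ∘ vstar.ofLp) ⬝ᵥ (Complex.ofRealHom ∘ vstar.ofLp) = 1 := by
    rw [← RingHom.map_dotProduct, EuclideanSpace.dotProduct_ofLp_self, hnorm, one_pow, map_one]
  have hρ := isGreatest_norm_image_spectrum_projection_mul_inv hww hBw hmult hσ hμ₂ hμ₂ne hmin
  rw [← Complex.ofRealHom_eq_coe σ, ← map_projection_mul_inv] at hρ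
  refine ⟨hρ, ?_⟩
  convert hρ.norm_image_spectrum_smul ((|lam - σ| : ℝ) : ℂ) using 2
  · congr 1
    ext i j
    simp only [map_apply, Matrix.smul_apply, smul_eq_mul, Complex.ofReal_mul,
      Complex.ofRealHom_eq_coe]
  · simp [div_eq_mul_inv]

/-- Convergence factor: if `λ*` is an algebraically simple eigenvalue of
`J(v*)` and `σ` is not a complex eigenvalue of `J(v*)`, the spectral radius of
`(I − v*v*ᵀ)(J(v*) − σI)⁻¹` equals `max_{μ ≠ λ*} 1/|μ − σ| = 1/|μ₂ − σ|`, and the spectral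
radius of `φ'(v*) = |λ* − σ|(I − v*v*ᵀ)(J(v*) − σI)⁻¹` equals `γ = |λ* − σ|/|μ₂ − σ|`. -/
theorem stmt10 {n : ℕ} (hn : 2 ≤ n)
    (A J : EuclideanSpace ℝ (Fin n) → Matrix (Fin n) (Fin n) ℝ)
    (hsymm : ∀ v : EuclideanSpace ℝ (Fin n), v ≠ 0 → (A v).IsSymm)
    (hsmooth : ContDiffOn ℝ 1 (fun w i j => A w i j) {(0 : EuclideanSpace ℝ (Fin n))}ᶜ)
    (hscale : ∀ α : ℝ, α ≠ 0 → ∀ v : EuclideanSpace ℝ (Fin n), v ≠ 0 → A (α • v) = A v)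
    (hJ : ∀ v : EuclideanSpace ℝ (Fin n), v ≠ 0 →
      HasFDerivAt (fun w => mvCLM (A w) w) (mvCLM (J v)) v)
    (lam σ : ℝ) (vstar : EuclideanSpace ℝ (Fin n)) (hnorm : ‖vstar‖ = 1)
    (heig : mvCLM (A vstar) vstar = lam • vstar)
    (hmult : ((J vstar).map (Complex.ofReal)).charpoly.rootMultiplicity (lam : ℂ) = 1)
    (hσ : (σ : ℂ) ∉ spectrum ℂ ((J vstar).map (Complex.ofReal)))
    (μ₂ : ℂ) (hμ₂ : μ₂ ∈ spectrum ℂ ((J vstar).map (Complex.ofReal)))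
    (hμ₂ne : μ₂ ≠ (lam : ℂ))
    (hmin : ∀ μ ∈ spectrum ℂ ((J vstar).map (Complex.ofReal)), μ ≠ (lam : ℂ) →
      ‖μ₂ - (σ : ℂ)‖ ≤ ‖μ - (σ : ℂ)‖) :
    IsGreatest ((fun z : ℂ => ‖z‖) '' spectrum ℂ
        ((((1 - Matrix.vecMulVec vstar vstar) * (J vstar - σ • 1)⁻¹)).map (Complex.ofReal)))
      ‖μ₂ - (σ : ℂ)‖⁻¹ ∧
    IsGreatest ((fun z : ℂ => ‖z‖) '' spectrum ℂ
        ((|lam - σ| • ((1 - Matrix.vecMulVec vstar vstar) * (J vstar - σ • 1)⁻¹)).map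
          (Complex.ofReal)))
      (|lam - σ| / ‖μ₂ - (σ : ℂ)‖) :=
  stmt10_general A J hscale hJ lam σ vstar hnorm heig hmult hσ μ₂ hμ₂ hμ₂ne hmin
end

section
/- Suppose (λ*, y*) is an eigenpair with ‖y*‖₂ = 1. Then the Fréchet derivative of the Rayleigh quotient p at y* is the linear functional x ↦ y*ᵀ(J(y*) − λ*I)x, i.e. p'(y*) = y*ᵀ(J(y*) − λ*I) as a row vector. -/
/-! For any map `f` with `f y = λ y`, the quotient rule applied to `⟪v, f v⟫ / ⟪v, v⟫`
gives the derivative `x ↦ (⟪x, f y⟫ + ⟪y, f' x⟫ - λ ⟪y, y⟫ · 2⟪y, x⟫) / ⟪y, y⟫`; the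
eigen-relation turns `⟪x, f y⟫` into `λ ⟪y, x⟫`, leaving `⟪y, (f' - λ) x⟫ / ⟪y, y⟫`. -/

open Matrix Asymptotics Topology
open scoped RealInnerProductSpace

theorem mvCLM_eq_toEuclideanCLM {ι : Type*} [Fintype ι] [DecidableEq ι] (M : Matrix ι ι ℝ) :
    mvCLM M = Matrix.toEuclideanCLM (𝕜 := ℝ) M := rfl

theorem mvCLM_sub_smul_one_s12 {ι : Type*} [Fintype ι] [DecidableEq ι] (M : Matrix ι ι ℝ)
    (c : ℝ) :
    mvCLM (M - c • 1) = mvCLM M - c • ContinuousLinearMap.id ℝ _ := by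
  simp only [mvCLM_eq_toEuclideanCLM, map_sub, map_smul, map_one]
  rfl

theorem HasFDerivAt.inner_div_inner_self_of_eq_smul {E : Type*} [NormedAddCommGroup E]
    [InnerProductSpace ℝ E] {f : E → E} {f' : E →L[ℝ] E} {y : E} {c : ℝ}
    (hf : HasFDerivAt f f' y) (hy : y ≠ 0) (heig : f y = c • y) :
    HasFDerivAt (fun v => ⟪v, f v⟫ / ⟪v, v⟫)
      (⟪y, y⟫⁻¹ • (innerSL ℝ y).comp (f' - c • ContinuousLinearMap.id ℝ E)) y := by
  have hid := hasFDerivAt_id (𝕜 := ℝ) y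
  have hyy : ⟪y, y⟫ ≠ 0 := inner_self_ne_zero.mpr hy
  have hnum : HasFDerivAt (fun v => ⟪v, f v⟫) _ y := hid.inner ℝ hf
  have hden : HasFDerivAt (fun v => ⟪v, v⟫) _ y := hid.inner ℝ hid
  simp_rw [div_eq_mul_inv]
  have hden_inv :=
    HasDerivAt.comp_hasFDerivAt (f := fun v => ⟪v, v⟫) y (hasDerivAt_inv hyy) hden
  refine (hnum.mul hden_inv).congr_fderiv ?_
  ext x
  simp only [_root_.add_apply, _root_.smul_apply, Function.comp_apply,
    ContinuousLinearMap.comp_apply, ContinuousLinearMap.prod_apply, ContinuousLinearMap.id_apply,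
    _root_.sub_apply, fderivInnerCLM_apply, innerSL_apply_apply, id_eq, heig,
    inner_sub_right, real_inner_smul_right, real_inner_comm x y, smul_eq_mul]
  field_simp
  ring

theorem stmt12_general {n : ℕ}
    (A J : EuclideanSpace ℝ (Fin n) → Matrix (Fin n) (Fin n) ℝ)
    (hJ : ∀ v : EuclideanSpace ℝ (Fin n), v ≠ 0 →
      HasFDerivAt (fun w => mvCLM (A w) w) (mvCLM (J v)) v)
    (lam : ℝ) (ystar : EuclideanSpace ℝ (Fin n)) (hnorm : ‖ystar‖ = 1)
    (heig : mvCLM (A ystar) ystar = lam • ystar) :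
    HasFDerivAt (rayQuot A)
      ((innerSL ℝ ystar).comp (mvCLM (J ystar - lam • 1))) ystar := by
  have hy : ystar ≠ 0 := norm_ne_zero_iff.mp (hnorm ▸ one_ne_zero)
  have hyy : ⟪ystar, ystar⟫ = 1 := by rw [real_inner_self_eq_norm_sq, hnorm, one_pow]
  have h := (hJ ystar hy).inner_div_inner_self_of_eq_smul hy heig
  rwa [hyy, inv_one, one_smul, ← mvCLM_sub_smul_one_s12] at h

/-- If `(λ*, y*)` is an eigenpair with `‖y*‖ = 1`, the Fréchet
derivative of the Rayleigh quotient `p` at `y*` is the functional `x ↦ y*ᵀ(J(y*) − λ*I)x`. -/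
theorem stmt12 {n : ℕ} (hn : 1 ≤ n)
    (A J : EuclideanSpace ℝ (Fin n) → Matrix (Fin n) (Fin n) ℝ)
    (hsymm : ∀ v : EuclideanSpace ℝ (Fin n), v ≠ 0 → (A v).IsSymm)
    (hsmooth : ContDiffOn ℝ 1 (fun w i j => A w i j) {(0 : EuclideanSpace ℝ (Fin n))}ᶜ)
    (hscale : ∀ α : ℝ, α ≠ 0 → ∀ v : EuclideanSpace ℝ (Fin n), v ≠ 0 → A (α • v) = A v)
    (hJ : ∀ v : EuclideanSpace ℝ (Fin n), v ≠ 0 →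
      HasFDerivAt (fun w => mvCLM (A w) w) (mvCLM (J v)) v)
    (lam : ℝ) (ystar : EuclideanSpace ℝ (Fin n)) (hnorm : ‖ystar‖ = 1)
    (heig : mvCLM (A ystar) ystar = lam • ystar) :
    HasFDerivAt (rayQuot A)
      ((innerSL ℝ ystar).comp (mvCLM (J ystar - lam • 1))) ystar :=
  stmt12_general A J hJ lam ystar hnorm heig
end

section
/- Let z : ℝ → ℝⁿ be differentiable with z(t) ≠ 0 for all t and satisfying z'(t) = −A(z(t))z(t). Define y(t) := z(t)/‖z(t)‖₂. Then y is differentiable and satisfies y'(t) = p(y(t))y(t) − A(y(t))y(t) for all t. -/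
/-!
Differentiating `z/‖z‖` gives `‖z‖⁻¹` times the component of `z'` orthogonal to `z`. For
`z' = −A(z)z` the component along `z` is `−p(z)z`, and scaling invariance of `A` makes `p`
homogeneous of degree 0 and `v ↦ A(v)v` of degree 1, so the result is `p(y)y − A(y)y`.
-/

open Matrix Asymptotics Topology
open scoped RealInnerProductSpace

section

variable {F : Type*} [NormedAddCommGroup F] [InnerProductSpace ℝ F]
  {f : ℝ → F} {f' : F} {x : ℝ}

theorem HasDerivAt.norm (hf : HasDerivAt f f' x) (h0 : f x ≠ 0) :
    HasDerivAt (fun s => ‖f s‖) (⟪f x, f'⟫ / ‖f x‖) x := by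
  have h := hf.norm_sq.sqrt (by positivity)
  simp only [Real.sqrt_sq (norm_nonneg _)] at h
  convert h using 1
  field_simp

theorem HasDerivAt.inv_norm_smul (hf : HasDerivAt f f' x) (h0 : f x ≠ 0) :
    HasDerivAt (fun s => ‖f s‖⁻¹ • f s)
      (‖f x‖⁻¹ • (f' - (⟪f x, f'⟫ / ‖f x‖ ^ 2) • f x)) x := by
  have hc : ‖f x‖ ≠ 0 := norm_ne_zero_iff.mpr h0
  refine (((hf.norm h0).inv hc).smul hf).congr_deriv ?_
  rw [Pi.inv_apply, smul_sub, smul_smul, sub_eq_add_neg, ← neg_smul]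
  congr 2
  field_simp

end

theorem rayQuot_smul {n : ℕ} (A : EuclideanSpace ℝ (Fin n) → Matrix (Fin n) (Fin n) ℝ)
    {α : ℝ} (hα : α ≠ 0) {v : EuclideanSpace ℝ (Fin n)} (hA : A (α • v) = A v) :
    rayQuot A (α • v) = rayQuot A v := by
  simp only [rayQuot, hA, map_smul, real_inner_smul_left, real_inner_smul_right]
  field_simp

theorem stmt13_general {n : ℕ}
    (A : EuclideanSpace ℝ (Fin n) → Matrix (Fin n) (Fin n) ℝ)
    (hscale : ∀ α : ℝ, α ≠ 0 → ∀ v : EuclideanSpace ℝ (Fin n), v ≠ 0 → A (α • v) = A v)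
    (z : ℝ → EuclideanSpace ℝ (Fin n)) (hz0 : ∀ t, z t ≠ 0)
    (hz : ∀ t, HasDerivAt z (-(mvCLM (A (z t)) (z t))) t) :
    ∀ t, HasDerivAt (fun s => ‖z s‖⁻¹ • z s)
      (rayQuot A (‖z t‖⁻¹ • z t) • (‖z t‖⁻¹ • z t) -
        mvCLM (A (‖z t‖⁻¹ • z t)) (‖z t‖⁻¹ • z t)) t := by
  intro t
  have hc : ‖z t‖⁻¹ ≠ 0 := inv_ne_zero (norm_ne_zero_iff.mpr (hz0 t))
  have hA : A (‖z t‖⁻¹ • z t) = A (z t) := hscale _ hc _ (hz0 t)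
  refine ((hz t).inv_norm_smul (hz0 t)).congr_deriv ?_
  rw [rayQuot_smul A hc hA, hA, map_smul, rayQuot, inner_neg_right, real_inner_self_eq_norm_sq,
    neg_div]
  module

/-- If `z` is a nonvanishing solution of `z' = −A(z)z`, then the
normalization `y(t) = z(t)/‖z(t)‖` satisfies `y' = p(y)y − A(y)y`. -/
theorem stmt13 {n : ℕ} (hn : 1 ≤ n)
    (A : EuclideanSpace ℝ (Fin n) → Matrix (Fin n) (Fin n) ℝ)
    (hsymm : ∀ v : EuclideanSpace ℝ (Fin n), v ≠ 0 → (A v).IsSymm)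
    (hsmooth : ContDiffOn ℝ 1 (fun w i j => A w i j) {(0 : EuclideanSpace ℝ (Fin n))}ᶜ)
    (hscale : ∀ α : ℝ, α ≠ 0 → ∀ v : EuclideanSpace ℝ (Fin n), v ≠ 0 → A (α • v) = A v)
    (z : ℝ → EuclideanSpace ℝ (Fin n)) (hz0 : ∀ t, z t ≠ 0)
    (hz : ∀ t, HasDerivAt z (-(mvCLM (A (z t)) (z t))) t) :
    ∀ t, HasDerivAt (fun s => ‖z s‖⁻¹ • z s)
      (rayQuot A (‖z t‖⁻¹ • z t) • (‖z t‖⁻¹ • z t) -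
        mvCLM (A (‖z t‖⁻¹ • z t)) (‖z t‖⁻¹ • z t)) t :=
  stmt13_general A hscale z hz0 hz
end

section
/- Let y : ℝ → ℝⁿ be differentiable with y(t) ≠ 0 for all t, satisfying y'(t) = p(y(t))y(t) − A(y(t))y(t) and ‖y(0)‖₂ = 1. Then ‖y(t)‖₂ = 1 for all t. -/
open Matrix Asymptotics Topology
open scoped RealInnerProductSpace

/-- If `y` is a nonvanishing solution of `y' = p(y)y − A(y)y` with
`‖y(0)‖ = 1`, then `‖y(t)‖ = 1` for all `t`. -/
theorem stmt14 {n : ℕ} (hn : 1 ≤ n)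
    (A : EuclideanSpace ℝ (Fin n) → Matrix (Fin n) (Fin n) ℝ)
    (hsymm : ∀ v : EuclideanSpace ℝ (Fin n), v ≠ 0 → (A v).IsSymm)
    (hsmooth : ContDiffOn ℝ 1 (fun w i j => A w i j) {(0 : EuclideanSpace ℝ (Fin n))}ᶜ)
    (hscale : ∀ α : ℝ, α ≠ 0 → ∀ v : EuclideanSpace ℝ (Fin n), v ≠ 0 → A (α • v) = A v)
    (y : ℝ → EuclideanSpace ℝ (Fin n)) (hy0 : ∀ t, y t ≠ 0)
    (hy : ∀ t, HasDerivAt y (rayQuot A (y t) • y t - mvCLM (A (y t)) (y t)) t)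
    (hinit : ‖y 0‖ = 1) :
    ∀ t, ‖y t‖ = 1 := by
  set g : ℝ → ℝ := fun t => ⟪y t, y t⟫ with hg
  have hderiv : ∀ t, HasDerivAt g 0 t := by
    intro t
    have h := (hy t).inner ℝ (hy t)
    have hyy : ⟪y t, y t⟫ ≠ 0 := inner_self_ne_zero.mpr (hy0 t)
    have hray : rayQuot A (y t) * ⟪y t, y t⟫ = ⟪y t, mvCLM (A (y t)) (y t)⟫ := by
      rw [rayQuot, div_mul_cancel₀ _ hyy]
    have hval : ⟪y t, rayQuot A (y t) • y t - mvCLM (A (y t)) (y t)⟫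
        + ⟪rayQuot A (y t) • y t - mvCLM (A (y t)) (y t), y t⟫ = (0 : ℝ) := by
      rw [inner_sub_right, inner_sub_left, real_inner_smul_right, real_inner_smul_left,
        real_inner_comm (mvCLM (A (y t)) (y t)) (y t), hray]
      linarith [real_inner_comm (mvCLM (A (y t)) (y t)) (y t)]
    exact hval ▸ h
  have hconst : ∀ t, g t = g 0 :=
    fun t => is_const_of_deriv_eq_zero (fun s => (hderiv s).differentiableAt)
      (fun s => (hderiv s).deriv) t 0
  intro t
  have h2 : g t = ‖y t‖ ^ 2 := real_inner_self_eq_norm_sq _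
  have h3 : g 0 = ‖y 0‖ ^ 2 := real_inner_self_eq_norm_sq _
  rw [hinit] at h3; norm_num at h3
  have : ‖y t‖ ^ 2 = 1 := by rw [← h2, hconst t, h3]
  nlinarith [norm_nonneg (y t)]
end

section
/- Fix σ ∈ ℝ. Let (v_k) be generated by inverse iteration: v_{k+1} = ψ(v_k)/‖ψ(v_k)‖₂ where ψ(v) = (J(v) − σI)⁻¹v, and let (y_k) be generated by the projected Rosenbrock–Euler scheme: with step length h_k = 1/(p(y_k) − σ), set ỹ_{k+1} := ((1/h_k − p(y_k))I + J(y_k))⁻¹ (1/h_k) y_k and y_{k+1} := ỹ_{k+1}/‖ỹ_{k+1}‖₂. Assume y_0 = v_0 with ‖v_0‖₂ = 1, and assume for every k that p(v_k) > σ and J(v_k) − σI is invertible. Then v_k = y_k for all k ∈ ℕ. -/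
open Matrix Asymptotics Topology
open scoped RealInnerProductSpace

/-!
With the step length `h = 1/(p(y) - σ)` the shift `1/h - p(y)` in the linearized backward Euler
step is exactly `-σ`, so the unnormalized Rosenbrock–Euler iterate is `(p(y) - σ) • ψ(y)`.
Since `p(y) > σ`, this positive factor disappears under normalization, and the two iterations
agree step by step.
-/

theorem inv_norm_smul_pos_smul {E : Type*} [NormedAddCommGroup E] [NormedSpace ℝ E]
    {c : ℝ} (hc : 0 < c) (x : E) : ‖c • x‖⁻¹ • (c • x) = ‖x‖⁻¹ • x := by
  rw [norm_smul, Real.norm_of_nonneg hc.le, mul_inv, smul_smul, mul_comm c⁻¹, mul_assoc,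
    inv_mul_cancel₀ hc.ne', mul_one]

theorem rosenbrockEuler_step_eq_smul_invitPsi {n : ℕ}
    (J : EuclideanSpace ℝ (Fin n) → Matrix (Fin n) (Fin n) ℝ) (σ p : ℝ)
    (y : EuclideanSpace ℝ (Fin n)) :
    mvCLM (((1 / (1 / (p - σ)) - p) • (1 : Matrix (Fin n) (Fin n) ℝ) + J y)⁻¹)
      ((1 / (1 / (p - σ))) • y) = (p - σ) • invitPsi J σ y := by
  have hshift : (1 / (1 / (p - σ)) - p) • (1 : Matrix (Fin n) (Fin n) ℝ) + J y = J y - σ • 1 := by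
    rw [one_div_one_div, sub_sub_cancel_left, neg_smul, neg_add_eq_sub]
  rw [hshift, one_div_one_div, map_smul, invitPsi]

theorem stmt16_general {n : ℕ}
    (A J : EuclideanSpace ℝ (Fin n) → Matrix (Fin n) (Fin n) ℝ)
    (σ : ℝ) (v y ytil : ℕ → EuclideanSpace ℝ (Fin n)) (h : ℕ → ℝ)
    (hy0 : y 0 = v 0)
    (hvrec : ∀ k, v (k + 1) = ‖invitPsi J σ (v k)‖⁻¹ • invitPsi J σ (v k))
    (hh : ∀ k, h k = 1 / (rayQuot A (y k) - σ))
    (hytil : ∀ k, ytil k =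
      mvCLM ((((1 / h k - rayQuot A (y k)) • (1 : Matrix (Fin n) (Fin n) ℝ) +
        J (y k))⁻¹)) ((1 / h k) • y k))
    (hyrec : ∀ k, y (k + 1) = ‖ytil k‖⁻¹ • ytil k)
    (hray : ∀ k, σ < rayQuot A (v k)) :
    ∀ k, v k = y k := by
  intro k
  induction k with
  | zero => exact hy0.symm
  | succ k ih =>
    have hpos : 0 < rayQuot A (y k) - σ := by
      rw [← ih]
      exact sub_pos.mpr (hray k)
    rw [hyrec k, hytil k, hh k, rosenbrockEuler_step_eq_smul_invitPsi,
      inv_norm_smul_pos_smul hpos, hvrec k, ih]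

/-- Inverse iteration `v_{k+1} = ψ(v_k)/‖ψ(v_k)‖` coincides with the
projected Rosenbrock–Euler discretization of `y' = p(y)y − A(y)y` with step length
`h_k = 1/(p(y_k) − σ)`, provided `y_0 = v_0`, `‖v_0‖ = 1`, and for all `k` one has
`p(v_k) > σ` and `J(v_k) − σI` invertible. -/
theorem stmt16 {n : ℕ} (hn : 1 ≤ n)
    (A J : EuclideanSpace ℝ (Fin n) → Matrix (Fin n) (Fin n) ℝ)
    (hsymm : ∀ v : EuclideanSpace ℝ (Fin n), v ≠ 0 → (A v).IsSymm)
    (hsmooth : ContDiffOn ℝ 1 (fun w i j => A w i j) {(0 : EuclideanSpace ℝ (Fin n))}ᶜ)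
    (hscale : ∀ α : ℝ, α ≠ 0 → ∀ v : EuclideanSpace ℝ (Fin n), v ≠ 0 → A (α • v) = A v)
    (hJ : ∀ v : EuclideanSpace ℝ (Fin n), v ≠ 0 →
      HasFDerivAt (fun w => mvCLM (A w) w) (mvCLM (J v)) v)
    (σ : ℝ) (v y ytil : ℕ → EuclideanSpace ℝ (Fin n)) (h : ℕ → ℝ)
    (hv0norm : ‖v 0‖ = 1) (hy0 : y 0 = v 0)
    (hvrec : ∀ k, v (k + 1) = ‖invitPsi J σ (v k)‖⁻¹ • invitPsi J σ (v k))
    (hh : ∀ k, h k = 1 / (rayQuot A (y k) - σ))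
    (hytil : ∀ k, ytil k =
      mvCLM ((((1 / h k - rayQuot A (y k)) • (1 : Matrix (Fin n) (Fin n) ℝ) +
        J (y k))⁻¹)) ((1 / h k) • y k))
    (hyrec : ∀ k, y (k + 1) = ‖ytil k‖⁻¹ • ytil k)
    (hray : ∀ k, σ < rayQuot A (v k))
    (hinv : ∀ k, IsUnit (J (v k) - σ • (1 : Matrix (Fin n) (Fin n) ℝ))) :
    ∀ k, v k = y k :=
  stmt16_general A J σ v y ytil h hy0 hvrec hh hytil hyrec hray
end

section
/- Let f : ℝⁿ → ℝⁿ be three times continuously differentiable, let y₀ ∈ ℝⁿ, and let y : [0, T) → ℝⁿ solve y'(t) = f(y(t)) with y(0) = y₀. For h > 0 small enough that I − h·Df(y₀) is invertible, define the Rosenbrock–Euler step ỹ₁(h) := y₀ + h (I − h·Df(y₀))⁻¹ f(y₀). Then the local error satisfies ‖ỹ₁(h) − y(h)‖₂ = (h²/2)‖Df(y₀)[f(y₀)]‖₂ + O(h³) as h → 0⁺. -/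
/-!
With `A = Df(y₀)`, the Neumann series gives `(I - hA)⁻¹ = I + hA + O(h²)`, so the
Rosenbrock–Euler step is `y₀ + h f(y₀) + h² A f(y₀) + O(h³)`. Along the solution
`y'' = Df(y) y'`, so `y` is `C³` as soon as `f` is `C²`, and Taylor's theorem gives
`y(h) = y₀ + h f(y₀) + (h²/2) A f(y₀) + O(h³)`. The two expansions differ by
`(h²/2) A f(y₀) + O(h³)`, and the reverse triangle inequality passes this to norms.
-/

open Asymptotics Topology Set Filter

theorem NormedRing.inverse_one_sub_smul_sub_isBigO {𝕜 R : Type*} [NontriviallyNormedField 𝕜]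
    [NormedRing R] [HasSummableGeomSeries R] [NormedAlgebra 𝕜 R] (a : R) :
    (fun h : 𝕜 => Ring.inverse (1 - h • a) - 1 - h • a) =O[𝓝 0] fun h => h ^ 2 := by
  have hlim : Tendsto (fun h : 𝕜 => -(h • a)) (𝓝 0) (𝓝 0) :=
    ((continuous_id.smul continuous_const).neg).tendsto' 0 0 (by simp)
  have hsq : (fun h : 𝕜 => ‖-(h • a)‖ ^ 2) =O[𝓝 0] fun h => h ^ 2 :=
    .of_bound (‖a‖ ^ 2) <| .of_forall fun h => by simp [norm_smul, mul_pow, mul_comm]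
  convert ((NormedRing.inverse_add_norm_diff_nth_order 1 2).comp_tendsto hlim).trans hsq using 2
  simp [sub_eq_add_neg, add_assoc]

section Autonomous

variable {E : Type*} [NormedAddCommGroup E] [NormedSpace ℝ E] {f : E → E} {y : ℝ → E}

theorem taylorWithinEval_two_of_hasDerivWithinAt_comp {s : Set ℝ} {t₀ : ℝ}
    (hs : UniqueDiffOn ℝ s) (ht₀ : t₀ ∈ s) (hf : DifferentiableAt ℝ f (y t₀))
    (hy : ∀ t ∈ s, HasDerivWithinAt y (f (y t)) s t) (t : ℝ) :
    taylorWithinEval y 2 s t₀ t =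
      y t₀ + (t - t₀) • f (y t₀) + ((t - t₀) ^ 2 / 2) • fderiv ℝ f (y t₀) (f (y t₀)) := by
  have hderiv : EqOn (iteratedDerivWithin 1 y s) (f ∘ y) s := fun t ht => by
    rw [iteratedDerivWithin_one]; exact (hy t ht).derivWithin (hs t ht)
  have hsecond : iteratedDerivWithin 2 y s t₀ = fderiv ℝ f (y t₀) (f (y t₀)) := by
    rw [iteratedDerivWithin_succ, derivWithin_congr hderiv (hderiv ht₀)]
    exact (hf.hasFDerivAt.comp_hasDerivWithinAt t₀ (hy t₀ ht₀)).derivWithin (hs t₀ ht₀)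
  simp [taylor_within_apply, hderiv ht₀, hsecond, Nat.factorial]
  ring_nf

theorem contDiffOn_succ_of_hasDerivWithinAt_comp {s : Set ℝ} (hs : UniqueDiffOn ℝ s) {m : ℕ}
    (hf : ContDiff ℝ m f) (hy : ∀ t ∈ s, HasDerivWithinAt y (f (y t)) s t) :
    ContDiffOn ℝ (m + 1) y s := by
  have hdiff : DifferentiableOn ℝ y s := fun t ht => (hy t ht).differentiableWithinAt
  have hderiv : EqOn (derivWithin y s) (f ∘ y) s := fun t ht => (hy t ht).derivWithin (hs t ht)
  induction m with
  | zero =>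
    rw [contDiffOn_succ_iff_derivWithin hs]
    exact ⟨hdiff, by simp, (hf.comp_contDiffOn (contDiffOn_zero.2 hdiff.continuousOn)).congr hderiv⟩
  | succ k ih =>
    rw [contDiffOn_succ_iff_derivWithin hs]
    exact ⟨hdiff, by simp, (hf.comp_contDiffOn (ih (hf.of_le (by norm_cast; omega)))).congr hderiv⟩

theorem isBigO_sub_taylor_two_of_hasDerivAt_comp (hf : ContDiff ℝ 2 f) {a T : ℝ} (haT : a < T)
    (hy : ∀ t ∈ Ico a T, HasDerivAt y (f (y t)) t) :
    (fun t => y t - (y a + (t - a) • f (y a) + ((t - a) ^ 2 / 2) • fderiv ℝ f (y a) (f (y a))))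
      =O[𝓝[>] a] fun t => (t - a) ^ 3 := by
  obtain ⟨b, hab, hbT⟩ := exists_between haT
  have hs : UniqueDiffOn ℝ (Icc a b) := uniqueDiffOn_Icc hab
  have hyIcc : ∀ t ∈ Icc a b, HasDerivWithinAt y (f (y t)) (Icc a b) t := fun t ht =>
    (hy t ⟨ht.1, ht.2.trans_lt hbT⟩).hasDerivWithinAt
  obtain ⟨C, hC⟩ := exists_taylor_mean_remainder_bound hab.le
    (contDiffOn_succ_of_hasDerivWithinAt_comp hs hf hyIcc)
  refine .of_bound C ?_
  filter_upwards [Ioo_mem_nhdsGT hab] with t ht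
  have hta : 0 < t - a := sub_pos.2 ht.1
  rw [← taylorWithinEval_two_of_hasDerivWithinAt_comp hs (left_mem_Icc.2 hab.le)
    (hf.differentiable two_ne_zero _) hyIcc, Real.norm_of_nonneg (by positivity)]
  exact hC t (Ioo_subset_Icc_self ht)

end Autonomous

/-- Local error of the Rosenbrock–Euler step
`ỹ₁(h) = y₀ + h (I − h Df(y₀))⁻¹ f(y₀)` for `y' = f(y)`, `y(0) = y₀`:
`‖ỹ₁(h) − y(h)‖ = (h²/2)‖Df(y₀)[f(y₀)]‖ + O(h³)` as `h → 0⁺`. -/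
theorem stmt17 {n : ℕ} (f : EuclideanSpace ℝ (Fin n) → EuclideanSpace ℝ (Fin n))
    (hf : ContDiff ℝ 3 f) (y₀ : EuclideanSpace ℝ (Fin n)) (T : ℝ) (hT : 0 < T)
    (y : ℝ → EuclideanSpace ℝ (Fin n)) (hy0 : y 0 = y₀)
    (hy : ∀ t ∈ Set.Ico (0 : ℝ) T, HasDerivAt y (f (y t)) t) :
    (fun h : ℝ =>
        ‖(y₀ + h • (Ring.inverse (1 - h • fderiv ℝ f y₀)) (f y₀)) - y h‖ -
          h ^ 2 / 2 * ‖fderiv ℝ f y₀ (f y₀)‖)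
      =O[𝓝[>] (0 : ℝ)] (fun h => h ^ 3) := by
  set A := fderiv ℝ f y₀
  have hneumann : (fun h : ℝ => h • (Ring.inverse (1 - h • A) - 1 - h • A) (f y₀))
      =O[𝓝[>] 0] fun h => h ^ 3 := by
    have hres := (ContinuousLinearMap.apply ℝ _ (f y₀)).isBigO_comp _ _ |>.trans
      (NormedRing.inverse_one_sub_smul_sub_isBigO (𝕜 := ℝ) A)
    simpa [pow_succ'] using ((isBigO_refl (fun h : ℝ => h) _).smul hres).mono nhdsWithin_le_nhds
  have htaylor : (fun h => y h - (y₀ + h • f y₀ + (h ^ 2 / 2) • A (f y₀)))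
      =O[𝓝[>] 0] fun h => h ^ 3 := by
    simpa [hy0] using isBigO_sub_taylor_two_of_hasDerivAt_comp (hf.of_le (by norm_num)) hT hy
  refine .trans (.of_bound' (.of_forall fun h => ?_)) (hneumann.sub htaylor)
  have hv : h ^ 2 / 2 * ‖A (f y₀)‖ = ‖(h ^ 2 / 2) • A (f y₀)‖ := by
    rw [norm_smul, Real.norm_of_nonneg (by positivity)]
  rw [Real.norm_eq_abs, hv]
  refine (abs_norm_sub_norm_le _ _).trans_eq (congrArg norm ?_)
  simp only [sub_apply, smul_apply, one_apply_eq_self]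
  module
end
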